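/- arXiv:math/0406583 — 3 statements merged into one kernel-verified Lean document; each statement's English description precedes it below -/
import Mathlib

section
/- Let W be a real Hilbert space with orthonormal basis {e_i}_{i≥0} and let w = ∑_{i≥1} i^{−3/4} e_i. Then any bilinear form P(w) on W* × W* realizing the Witt bracket {φ_i, φ_0} = i φ_i at this point w, i.e. with P(w)(e_i*, e_0*) = i·⟨e_i, w⟩ = i^{1/4} for all i, is unbounded. -/
open scoped RealInnerProductSpace

lemma summable_aux {W : Type*} [NormedAddCommGroup W] [InnerProductSpace ℝ W]
    [CompleteSpace W] (b : HilbertBasis ℕ ℝ W) :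
    Summable fun j : ℕ => (((j : ℝ) + 1) ^ (-(3/4 : ℝ))) • (b (j + 1) : W) := by
  have hf : Memℓp (fun k : ℕ => ((k : ℝ) ^ (-(3/4 : ℝ)) : ℝ)) 2 := by
    apply memℓp_gen
    have hsum : Summable (fun k : ℕ => ((k : ℝ) ^ (-(3/2 : ℝ)))) := by
      rw [Real.summable_nat_rpow]; norm_num
    refine hsum.congr fun k => ?_
    rw [Real.norm_eq_abs, abs_of_nonneg (Real.rpow_nonneg (Nat.cast_nonneg k) _),
      ← Real.rpow_mul (Nat.cast_nonneg k)]
    norm_num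
  have h := (b.hasSum_repr_symm ⟨_, hf⟩).summable
  have hs : Summable fun k : ℕ => ((k : ℝ) ^ (-(3/4 : ℝ))) • (b k : W) := h
  have hc := hs.comp_injective (add_left_injective 1)
  refine hc.congr fun j => ?_
  simp [Function.comp]

/-- Let `W` be a real Hilbert space with orthonormal basis `{e_i}` and let
`w = ∑_{i≥1} i^{−3/4} e_i`. There is no bounded bilinear form `P` on `W* × W*` with
`P(e_i*, e_0*) = i ⟨e_i, w⟩` for all `i ≥ 1`: the values `i ⟨e_i, w⟩ = i^{1/4}` are unbounded,
so a bilinear form realizing the Witt bracket `{φ_i, φ_0} = i φ_i` at `w` cannot be bounded. -/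
theorem no_bounded_bilinear_form {W : Type*} [NormedAddCommGroup W] [InnerProductSpace ℝ W]
    [CompleteSpace W] (b : HilbertBasis ℕ ℝ W) :
    ¬ ∃ P : (W →L[ℝ] ℝ) →L[ℝ] (W →L[ℝ] ℝ) →L[ℝ] ℝ,
      ∀ i : ℕ, 1 ≤ i →
        P (innerSL ℝ (b i)) (innerSL ℝ (b 0)) =
          (i : ℝ) * ⟪(b i : W), ∑' j : ℕ, (((j : ℝ) + 1) ^ (-(3/4 : ℝ))) • (b (j + 1) : W)⟫ := by
  rintro ⟨P, hP⟩
  have horth := b.orthonormal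
  -- inner value computation
  have hinner : ∀ i : ℕ, 1 ≤ i →
      ⟪(b i : W), ∑' j : ℕ, (((j : ℝ) + 1) ^ (-(3/4 : ℝ))) • (b (j + 1) : W)⟫
        = (i : ℝ) ^ (-(3/4 : ℝ)) := by
    intro i hi
    rw [← innerSL_apply_apply ℝ, ContinuousLinearMap.map_tsum _ (summable_aux b)]
    have hterm : ∀ j : ℕ, innerSL ℝ ((b i : W)) ((((j : ℝ) + 1) ^ (-(3/4 : ℝ))) • (b (j + 1) : W))
        = if j = i - 1 then (i : ℝ) ^ (-(3/4 : ℝ)) else 0 := by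
      intro j
      rw [innerSL_apply_apply, real_inner_smul_right, orthonormal_iff_ite.mp horth]
      rcases eq_or_ne j (i - 1) with h | h
      · subst h
        rw [if_pos (by omega), if_pos rfl, mul_one]
        congr 1
        have : ((i - 1 : ℕ) : ℝ) + 1 = (i : ℝ) := by
          have h1 : (i - 1) + 1 = i := Nat.sub_add_cancel hi
          exact_mod_cast congrArg (Nat.cast : ℕ → ℝ) h1
        rw [this]
      · rw [if_neg (by omega), if_neg h, mul_zero]
    rw [tsum_congr hterm, tsum_ite_eq]
  -- P is a bounded operator
  obtain ⟨C, hC0, hC⟩ := ContinuousLinearMap.bound (𝕜 := ℝ) (𝕜₂ := ℝ) (E := W →L[ℝ] ℝ) (F := (W →L[ℝ] ℝ) →L[ℝ] ℝ) P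
  -- choose a large index
  set n : ℕ := ⌈C ^ 4⌉₊ + 1 with hn
  have hn1 : 1 ≤ n := by omega
  have hnpos : (0 : ℝ) < (n : ℝ) := by exact_mod_cast Nat.pos_of_ne_zero (by omega)
  have hval : P (innerSL ℝ (b n)) (innerSL ℝ (b 0)) = (n : ℝ) ^ (1/4 : ℝ) := by
    rw [hP n hn1, hinner n hn1]
    calc (n : ℝ) * (n : ℝ) ^ (-(3/4 : ℝ))
        = (n : ℝ) ^ (1 : ℝ) * (n : ℝ) ^ (-(3/4 : ℝ)) := by rw [Real.rpow_one]
      _ = (n : ℝ) ^ ((1 : ℝ) + -(3/4 : ℝ)) := (Real.rpow_add hnpos _ _).symm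
      _ = (n : ℝ) ^ (1/4 : ℝ) := by norm_num
  have hbound : ‖P (innerSL ℝ (b n)) (innerSL ℝ (b 0))‖ ≤ C := by
    calc ‖P (innerSL ℝ (b n)) (innerSL ℝ (b 0))‖
        ≤ ‖P (innerSL ℝ (b n))‖ * ‖innerSL ℝ (b 0)‖ :=
          (P (innerSL ℝ (b n))).le_opNorm _
      _ ≤ (C * ‖innerSL ℝ (b n)‖) * ‖innerSL ℝ (b 0)‖ := by
          apply mul_le_mul_of_nonneg_right (hC _) (norm_nonneg _)
      _ = C := by
          rw [innerSL_apply_norm, innerSL_apply_norm, horth.1 n, horth.1 0]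
          ring
  rw [hval, Real.norm_of_nonneg (Real.rpow_nonneg (Nat.cast_nonneg n) _)] at hbound
  have hgt : C ^ 4 < (n : ℝ) := by
    have h1 : C ^ 4 ≤ (⌈C ^ 4⌉₊ : ℝ) := Nat.le_ceil _
    have h2 : ((⌈C ^ 4⌉₊ : ℕ) : ℝ) < (n : ℝ) := by exact_mod_cast Nat.lt_succ_self _
    linarith
  have ht : ((n : ℝ) ^ (1/4 : ℝ)) ^ (4 : ℕ) = (n : ℝ) := by
    rw [← Real.rpow_natCast ((n : ℝ) ^ (1/4 : ℝ)) 4, ← Real.rpow_mul (Nat.cast_nonneg n)]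
    norm_num
  have ht0 : (0 : ℝ) ≤ (n : ℝ) ^ (1/4 : ℝ) := Real.rpow_nonneg (Nat.cast_nonneg n) _
  have := pow_le_pow_left₀ ht0 hbound 4
  rw [ht] at this
  linarith
end

section
/- The set F_HS of functions of Hilbert-Schmidt type on W = H ⊕ H* is a subalgebra of C^∞(W,𝕂) under pointwise operations: it is closed under scalar multiplication, addition, and pointwise multiplication. -/
open Finset

lemma mapCast_card {r : ℕ} (S : Finset (Fin r)) :
    (S.map Fin.castSuccEmb).card = S.card := Finset.card_map _

lemma mem_mapCast {r : ℕ} (S : Finset (Fin r)) (i : Fin (r + 1)) :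
    i ∈ S.map Fin.castSuccEmb ↔ ∃ j ∈ S, Fin.castSucc j = i := by
  rw [Finset.mem_map]; exact Iff.rfl

lemma last_not_mem_mapCast {r : ℕ} (S : Finset (Fin r)) :
    Fin.last r ∉ S.map Fin.castSuccEmb := by
  rw [mem_mapCast]
  rintro ⟨j, -, hj⟩
  exact (Fin.castSucc_lt_last j).ne hj

lemma insert_card {r : ℕ} (S : Finset (Fin r)) :
    (insert (Fin.last r) (S.map Fin.castSuccEmb)).card = S.card + 1 := by
  rw [Finset.card_insert_of_notMem (last_not_mem_mapCast S), mapCast_card]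

lemma orderEmb_mapCast {r k : ℕ} (S : Finset (Fin r)) (h : S.card = k)
    (h' : (S.map Fin.castSuccEmb).card = k) (j : Fin k) :
    (S.map Fin.castSuccEmb).orderEmbOfFin h' j =
      Fin.castSucc (S.orderEmbOfFin h j) := by
  refine (congrFun (Finset.orderEmbOfFin_unique h'
    (f := fun j => Fin.castSucc (S.orderEmbOfFin h j))
    (fun j => ?_) (fun a b hab => ?_)) j).symm
  · rw [mem_mapCast]; exact ⟨_, Finset.orderEmbOfFin_mem S h j, rfl⟩
  · exact Fin.castSucc_lt_castSucc_iff.2 ((S.orderEmbOfFin h).strictMono hab)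

lemma orderEmb_insertLast {r k : ℕ} (S : Finset (Fin r)) (h : S.card = k)
    (h' : (insert (Fin.last r) (S.map Fin.castSuccEmb)).card = k + 1)
    (j : Fin (k + 1)) :
    (insert (Fin.last r) (S.map Fin.castSuccEmb)).orderEmbOfFin h' j =
      (Fin.snoc (fun i => Fin.castSucc (S.orderEmbOfFin h i)) (Fin.last r) :
        Fin (k + 1) → Fin (r + 1)) j := by
  refine (congrFun (Finset.orderEmbOfFin_unique h'
    (f := (Fin.snoc (fun i => Fin.castSucc (S.orderEmbOfFin h i)) (Fin.last r) :
        Fin (k + 1) → Fin (r + 1)))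
    (fun j => ?_) (fun a b hab => ?_)) j).symm
  · refine Fin.lastCases ?_ (fun i => ?_) j
    · simp
    · rw [Fin.snoc_castSucc, Finset.mem_insert, mem_mapCast]
      exact Or.inr ⟨_, Finset.orderEmbOfFin_mem S h i, rfl⟩
  · induction b using Fin.lastCases with
    | last =>
      obtain ⟨i1, rfl⟩ := Fin.exists_castSucc_eq.2 hab.ne
      simpa [Fin.snoc_castSucc] using Fin.castSucc_lt_last _
    | cast i2 =>
      obtain ⟨i1, rfl⟩ := Fin.exists_castSucc_eq.2
        (hab.trans (Fin.castSucc_lt_last i2)).ne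
      simp only [Fin.snoc_castSucc]
      exact Fin.castSucc_lt_castSucc_iff.2
        ((S.orderEmbOfFin h).strictMono (Fin.castSucc_lt_castSucc_iff.1 hab))

lemma compl_mapCast {r : ℕ} (S : Finset (Fin r)) :
    (S.map Fin.castSuccEmb)ᶜ =
      insert (Fin.last r) (Sᶜ.map Fin.castSuccEmb) := by
  ext i
  refine Fin.lastCases ?_ (fun j => ?_) i
  · simp [last_not_mem_mapCast S]
  · rw [Finset.mem_compl, mem_mapCast, Finset.mem_insert, mem_mapCast]
    simp only [(Fin.castSucc_lt_last j).ne, false_or, Fin.castSucc_inj]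
    constructor
    · intro hj
      refine ⟨j, ?_, rfl⟩
      simp only [Finset.mem_compl]
      intro hjS; exact hj ⟨j, hjS, rfl⟩
    · rintro ⟨a, ha, rfl⟩ ⟨b, hb, hba⟩
      exact (Finset.mem_compl.1 ha) (hba ▸ hb)

lemma compl_insertLast {r : ℕ} (S : Finset (Fin r)) :
    (insert (Fin.last r) (S.map Fin.castSuccEmb))ᶜ =
      Sᶜ.map Fin.castSuccEmb := by
  ext i
  refine Fin.lastCases ?_ (fun j => ?_) i
  · simp [last_not_mem_mapCast Sᶜ]
  · rw [Finset.mem_compl, Finset.mem_insert, mem_mapCast, mem_mapCast]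
    simp only [(Fin.castSucc_lt_last j).ne, false_or, Fin.castSucc_inj, not_or]
    constructor
    · rintro hj
      refine ⟨j, ?_, rfl⟩
      simp only [Finset.mem_compl]
      intro hjS; exact hj ⟨j, hjS, rfl⟩
    · rintro ⟨a, ha, rfl⟩ ⟨b, hb, hba⟩
      exact (Finset.mem_compl.1 ha) (hba ▸ hb)
section Equivs
open Finset

lemma castSucc_mem_mapCast {r : ℕ} (S : Finset (Fin r)) (i : Fin r) :
    Fin.castSucc i ∈ S.map Fin.castSuccEmb ↔ i ∈ S := by
  rw [mem_mapCast]
  constructor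
  · rintro ⟨j, hj, hji⟩
    rwa [← Fin.castSucc_inj.1 hji]
  · exact fun h => ⟨i, h, rfl⟩

/-- Subsets of `Fin (r+1)` are pairs (subset of `Fin r`, whether `last` is in). -/
noncomputable def finsetSuccEquiv (r : ℕ) : Finset (Fin r) × Bool ≃ Finset (Fin (r + 1)) where
  toFun p := if p.2 then insert (Fin.last r) (p.1.map Fin.castSuccEmb)
    else p.1.map Fin.castSuccEmb
  invFun T := (T.preimage Fin.castSucc (Fin.castSucc_injective r).injOn,
    decide (Fin.last r ∈ T))
  left_inv := by
    rintro ⟨S, b⟩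
    cases b
    · refine Prod.ext ?_ ?_
      · ext i
        dsimp only
        rw [Finset.mem_preimage, if_neg (by simp), castSucc_mem_mapCast]
      · dsimp only
        simp only [if_neg (by simp : ¬(false = true))]
        exact decide_eq_false (last_not_mem_mapCast S)
    · refine Prod.ext ?_ ?_
      · ext i
        dsimp only
        rw [Finset.mem_preimage, if_pos rfl, Finset.mem_insert]
        simp only [(Fin.castSucc_lt_last i).ne, false_or]
        exact castSucc_mem_mapCast S i
      · dsimp only
        simp only [if_pos rfl]
        exact decide_eq_true (Finset.mem_insert_self _ _)
  right_inv := by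
    intro T
    by_cases hT : Fin.last r ∈ T
    · ext i
      dsimp only
      rw [if_pos (by simpa using hT)]
      induction i using Fin.lastCases with
      | last => simpa using hT
      | cast j =>
        rw [Finset.mem_insert]
        simp only [(Fin.castSucc_lt_last j).ne, false_or]
        rw [castSucc_mem_mapCast, Finset.mem_preimage]
    · ext i
      dsimp only
      rw [if_neg (by simpa using hT)]
      induction i using Fin.lastCases with
      | last =>
        simp only [last_not_mem_mapCast, false_iff]
        exact hT
      | cast j =>
        rw [castSucc_mem_mapCast, Finset.mem_preimage]

lemma sum_finset_succ {M : Type*} [AddCommMonoid M] {r : ℕ} (f : Finset (Fin (r + 1)) → M) :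
    ∑ T : Finset (Fin (r + 1)), f T =
      (∑ S : Finset (Fin r), f (S.map Fin.castSuccEmb)) +
        ∑ S : Finset (Fin r), f (insert (Fin.last r) (S.map Fin.castSuccEmb)) := by
  rw [← (finsetSuccEquiv r).sum_comp f, Fintype.sum_prod_type_right]
  simp [finsetSuccEquiv, Finset.sum_add_distrib, add_comm]

end Equivs
section Leibniz
open Finset

variable {𝕜 : Type*} [RCLike 𝕜] {E : Type*} [NormedAddCommGroup E] [NormedSpace 𝕜 E]

lemma orderEmbOfFin_congr {α : Type*} [LinearOrder α] {s t : Finset α} (hst : s = t) {k : ℕ}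
    (hs : s.card = k) (ht : t.card = k) (j : Fin k) :
    s.orderEmbOfFin hs j = t.orderEmbOfFin ht j := by
  subst hst; rfl

lemma iter_congr (F : E → 𝕜) (x : E) {r k : ℕ} (S : Finset (Fin r)) (h : S.card = k)
    (v : Fin r → E) :
    iteratedFDeriv 𝕜 S.card F x (fun j => v (S.orderEmbOfFin rfl j)) =
      iteratedFDeriv 𝕜 k F x (fun j => v (S.orderEmbOfFin h j)) := by
  subst h; rfl

lemma contDiff_fderiv_apply {F : E → 𝕜} (hF : ContDiff 𝕜 (⊤ : ℕ∞) F) (u : E) :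
    ContDiff 𝕜 (⊤ : ℕ∞) (fun y => fderiv 𝕜 F y u) :=
  (hF.fderiv_right (by exact_mod_cast le_top)).clm_apply contDiff_const

lemma succ_term (F : E → 𝕜) (hF : ContDiff 𝕜 (⊤ : ℕ∞) F) (x u : E) {k : ℕ} (m : Fin k → E) :
    iteratedFDeriv 𝕜 (k + 1) F x (Fin.snoc m u) =
      iteratedFDeriv 𝕜 k (fun y => fderiv 𝕜 F y u) x m := by
  rw [iteratedFDeriv_succ_apply_right, Fin.init_snoc, Fin.snoc_last,
    iteratedFDeriv_clm_apply_const_apply (hF.fderiv_right (m := ((⊤ : ℕ∞) : WithTop ℕ∞)) (by exact_mod_cast le_top)) (by exact_mod_cast le_top)]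

lemma leibniz (r : ℕ) (F G : E → 𝕜) (hF : ContDiff 𝕜 (⊤ : ℕ∞) F) (hG : ContDiff 𝕜 (⊤ : ℕ∞) G) (x : E)
    (v : Fin r → E) :
    iteratedFDeriv 𝕜 r (fun y => F y * G y) x v =
      ∑ S : Finset (Fin r),
        iteratedFDeriv 𝕜 S.card F x (fun j => v (S.orderEmbOfFin rfl j)) *
          iteratedFDeriv 𝕜 Sᶜ.card G x (fun j => v (Sᶜ.orderEmbOfFin rfl j)) := by
  induction r generalizing F G with
  | zero =>
    have hu : (Finset.univ : Finset (Finset (Fin 0))) = {∅} := rfl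
    rw [hu, Finset.sum_singleton, iter_congr (k := 0) F x ∅ rfl v,
      iter_congr (k := 0) G x ∅ᶜ (by simp) v, iteratedFDeriv_zero_apply,
      iteratedFDeriv_zero_apply, iteratedFDeriv_zero_apply]
  | succ r IH =>
    set u := v (Fin.last r) with hu
    set w := Fin.init v with hw
    have hG' := contDiff_fderiv_apply hG u
    have hF' := contDiff_fderiv_apply hF u
    -- step 1: peel the last direction
    have step1 : iteratedFDeriv 𝕜 (r + 1) (fun y => F y * G y) x v =
        iteratedFDeriv 𝕜 r (fun y => F y * fderiv 𝕜 G y u + fderiv 𝕜 F y u * G y) x w := by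
      have e1 : (fun y => fderiv 𝕜 (fun z => F z * G z) y u) =
          fun y => F y * fderiv 𝕜 G y u + fderiv 𝕜 F y u * G y := by
        funext y
        rw [fderiv_fun_mul ((hF.differentiable (by simp)) y)
          ((hG.differentiable (by simp)) y)]
        simp [mul_comm]
      rw [iteratedFDeriv_succ_apply_right,
        iteratedFDeriv_clm_apply_const_apply ((hF.mul hG).fderiv_right (m := ((⊤ : ℕ∞) : WithTop ℕ∞))
          (by exact_mod_cast le_top)) (by exact_mod_cast le_top) (m := w) (u := u) |>.symm, e1]
    rw [step1, iteratedFDeriv_add_apply' ((hF.mul hG').of_le (by exact_mod_cast le_top)).contDiffAt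
      ((hF'.mul hG).of_le (by exact_mod_cast le_top)).contDiffAt, ContinuousMultilinearMap.add_apply, IH F (fun y => fderiv 𝕜 G y u) hF hG' w,
      IH (fun y => fderiv 𝕜 F y u) G hF' hG w, sum_finset_succ]
    congr 1
    · -- terms with last ∉ T : F-part gets S, G-part gets the extra derivative
      refine Finset.sum_congr rfl fun S _ => ?_
      rw [iter_congr F x (S.map Fin.castSuccEmb) (mapCast_card S) v,
        iter_congr (k := Sᶜ.card + 1) G x (S.map Fin.castSuccEmb)ᶜ
          (by rw [compl_mapCast]; exact insert_card Sᶜ) v]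
      have harg : (fun j => v ((S.map Fin.castSuccEmb).orderEmbOfFin (mapCast_card S) j)) =
          fun j => w (S.orderEmbOfFin rfl j) := by
        funext j
        rw [orderEmb_mapCast S rfl (mapCast_card S) j]
        rfl
      rw [harg]
      congr 1
      · have hv : (fun j => v (((S.map Fin.castSuccEmb)ᶜ).orderEmbOfFin
            (by rw [compl_mapCast]; exact insert_card Sᶜ) j)) =
            Fin.snoc (fun j => w (Sᶜ.orderEmbOfFin rfl j)) u := by
          funext j
          rw [orderEmbOfFin_congr (compl_mapCast S)
            (by rw [compl_mapCast]; exact insert_card Sᶜ) (insert_card Sᶜ) j,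
            orderEmb_insertLast Sᶜ rfl (insert_card Sᶜ) j]
          induction j using Fin.lastCases with
          | last => simp [hu]
          | cast i => simp [Fin.snoc_castSucc, hw, Fin.init]
        rw [hv, succ_term G hG x u]
    · -- terms with last ∈ T : F-part gets the extra derivative
      refine Finset.sum_congr rfl fun S _ => ?_
      rw [iter_congr F x (insert (Fin.last r) (S.map Fin.castSuccEmb)) (insert_card S) v,
        iter_congr (k := Sᶜ.card) G x (insert (Fin.last r) (S.map Fin.castSuccEmb))ᶜ
          (by rw [compl_insertLast]; exact mapCast_card Sᶜ) v]
      congr 1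
      · -- F-part
        have hv : (fun j => v ((insert (Fin.last r) (S.map Fin.castSuccEmb)).orderEmbOfFin
            (insert_card S) j)) = Fin.snoc (fun j => w (S.orderEmbOfFin rfl j)) u := by
          funext j
          rw [orderEmb_insertLast S rfl (insert_card S) j]
          induction j using Fin.lastCases with
          | last => simp [hu]
          | cast i => simp [Fin.snoc_castSucc, hw, Fin.init]
        rw [hv, succ_term F hF x u]
      · -- G-part
        have harg : (fun j => v (((insert (Fin.last r) (S.map Fin.castSuccEmb))ᶜ).orderEmbOfFin
            (by rw [compl_insertLast]; exact mapCast_card Sᶜ) j)) =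
            fun j => w (Sᶜ.orderEmbOfFin rfl j) := by
          funext j
          rw [orderEmbOfFin_congr (compl_insertLast S)
              (by rw [compl_insertLast]; exact mapCast_card Sᶜ) (mapCast_card Sᶜ) j,
            orderEmb_mapCast Sᶜ rfl (mapCast_card Sᶜ) j]
          rfl
        rw [harg]
end Leibniz
section Split
open Finset

/-- Splitting `I : Fin r → ℕ` along a subset `S` and its complement. -/
noncomputable def splitEquiv {r k m : ℕ} (S : Finset (Fin r)) (hk : S.card = k)
    (hm : Sᶜ.card = m) : (Fin r → ℕ) ≃ (Fin k → ℕ) × (Fin m → ℕ) where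
  toFun I := (fun j => I (S.orderEmbOfFin hk j), fun j => I (Sᶜ.orderEmbOfFin hm j))
  invFun p i :=
    if h : i ∈ S then p.1 ((S.orderIsoOfFin hk).symm ⟨i, h⟩)
    else p.2 ((Sᶜ.orderIsoOfFin hm).symm ⟨i, Finset.mem_compl.2 h⟩)
  left_inv I := by
    funext i
    by_cases h : i ∈ S
    · dsimp only
      rw [dif_pos h]
      congr 1
      have : S.orderEmbOfFin hk ((S.orderIsoOfFin hk).symm ⟨i, h⟩) =
          ((S.orderIsoOfFin hk) ((S.orderIsoOfFin hk).symm ⟨i, h⟩) : Fin r) :=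
        (Finset.coe_orderIsoOfFin_apply S hk _).symm
      rw [this, OrderIso.apply_symm_apply]
    · dsimp only
      rw [dif_neg h]
      congr 1
      have : Sᶜ.orderEmbOfFin hm ((Sᶜ.orderIsoOfFin hm).symm ⟨i, Finset.mem_compl.2 h⟩) =
          ((Sᶜ.orderIsoOfFin hm) ((Sᶜ.orderIsoOfFin hm).symm ⟨i, Finset.mem_compl.2 h⟩) : Fin r) :=
        (Finset.coe_orderIsoOfFin_apply Sᶜ hm _).symm
      rw [this, OrderIso.apply_symm_apply]
  right_inv p := by
    refine Prod.ext ?_ ?_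
    · funext j
      have h : S.orderEmbOfFin hk j ∈ S := Finset.orderEmbOfFin_mem S hk j
      dsimp only
      rw [dif_pos h]
      congr 1
      have : (⟨S.orderEmbOfFin hk j, h⟩ : {x // x ∈ S}) = S.orderIsoOfFin hk j :=
        Subtype.ext (Finset.coe_orderIsoOfFin_apply S hk j).symm
      rw [this, OrderIso.symm_apply_apply]
    · funext j
      have h : Sᶜ.orderEmbOfFin hm j ∈ Sᶜ := Finset.orderEmbOfFin_mem Sᶜ hm j
      dsimp only
      rw [dif_neg (Finset.mem_compl.1 h)]
      congr 1
      have : (⟨Sᶜ.orderEmbOfFin hm j, h⟩ : {x // x ∈ Sᶜ}) = Sᶜ.orderIsoOfFin hm j :=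
        Subtype.ext (Finset.coe_orderIsoOfFin_apply Sᶜ hm j).symm
      rw [show (⟨Sᶜ.orderEmbOfFin hm j, Finset.mem_compl.2 (Finset.mem_compl.1 h)⟩ :
          {x // x ∈ Sᶜ}) = ⟨Sᶜ.orderEmbOfFin hm j, h⟩ from rfl, this, OrderIso.symm_apply_apply]

lemma summable_split {r : ℕ} (S : Finset (Fin r)) (f : (Fin S.card → ℕ) → ℝ)
    (g : (Fin Sᶜ.card → ℕ) → ℝ) (hf : Summable f) (hg : Summable g)
    (hf0 : ∀ J, 0 ≤ f J) (hg0 : ∀ J, 0 ≤ g J) :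
    Summable fun I : Fin r → ℕ =>
      f (fun j => I (S.orderEmbOfFin rfl j)) * g (fun j => I (Sᶜ.orderEmbOfFin rfl j)) := by
  have h := hf.mul_of_nonneg hg hf0 hg0
  exact ((splitEquiv S rfl rfl).summable_iff
    (f := fun p : (Fin S.card → ℕ) × (Fin Sᶜ.card → ℕ) => f p.1 * g p.2)).2 h

end Split

noncomputable section

variable {𝕜 : Type*} [RCLike 𝕜]
variable {H : Type*} [NormedAddCommGroup H] [InnerProductSpace 𝕜 H]

/-- Basis directions in `W = H ⊕ H*`: `(e_i, 0)` for `α = true` ("index `i`") and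
`(0, e_i*)` for `α = false` ("index `i*`"), where `e_i* = ⟨e_i, ·⟩`. -/
def dirVec (b : HilbertBasis ℕ 𝕜 H) (α : Bool) (i : ℕ) : H × (H →L[𝕜] 𝕜) :=
  if α then ((b i : H), 0) else (0, innerSL 𝕜 (b i))

/-- A function `F : W → 𝕜` on `W = H ⊕ H*` is of Hilbert-Schmidt type if it is Fréchet-smooth
and, for every `r ≥ 1`, every choice of directions (in `H` or `H*`) and every point `w`, the
family of `r`-th partial derivatives along basis directions is square-summable. -/
def IsHS (b : HilbertBasis ℕ 𝕜 H) (F : H × (H →L[𝕜] 𝕜) → 𝕜) : Prop :=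
  ContDiff 𝕜 (⊤ : ℕ∞) F ∧
  ∀ r : ℕ, 0 < r → ∀ (α : Fin r → Bool) (w : H × (H →L[𝕜] 𝕜)),
    Summable fun I : Fin r → ℕ =>
      ‖iteratedFDeriv 𝕜 r F w (fun k => dirVec b (α k) (I k))‖ ^ 2

/-- the set `F_HS` of functions of Hilbert-Schmidt type on `W = H ⊕ H*` is a
subalgebra of `C^∞(W,𝕜)`: it is closed under scalar multiplication, addition, and pointwise
multiplication. -/
theorem isHS_subalgebra (b : HilbertBasis ℕ 𝕜 H) (c : 𝕜)
    (F G : H × (H →L[𝕜] 𝕜) → 𝕜) (hF : IsHS b F) (hG : IsHS b G) :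
    IsHS b (fun w => c * F w) ∧ IsHS b (fun w => F w + G w) ∧
      IsHS b (fun w => F w * G w) := by
  obtain ⟨hF1, hF2⟩ := hF
  obtain ⟨hG1, hG2⟩ := hG
  refine ⟨⟨contDiff_const.mul hF1, ?_⟩, ⟨hF1.add hG1, ?_⟩, ⟨hF1.mul hG1, ?_⟩⟩
  · -- scalar multiplication
    intro r hr α w
    have key : ∀ I : Fin r → ℕ,
        ‖iteratedFDeriv 𝕜 r (fun w => c * F w) w (fun k => dirVec b (α k) (I k))‖ ^ 2 =
        ‖c‖ ^ 2 * ‖iteratedFDeriv 𝕜 r F w (fun k => dirVec b (α k) (I k))‖ ^ 2 := by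
      intro I
      have : (fun w => c * F w) = fun w => c • F w := by
        funext y; rw [smul_eq_mul]
      rw [this, iteratedFDeriv_const_smul_apply' (hF1.of_le (by exact_mod_cast le_top)).contDiffAt,
        ContinuousMultilinearMap.smul_apply, norm_smul, mul_pow]
    rw [show (fun I : Fin r → ℕ =>
        ‖iteratedFDeriv 𝕜 r (fun w => c * F w) w (fun k => dirVec b (α k) (I k))‖ ^ 2) =
        fun I => ‖c‖ ^ 2 * ‖iteratedFDeriv 𝕜 r F w (fun k => dirVec b (α k) (I k))‖ ^ 2
      from funext key]
    exact (hF2 r hr α w).mul_left _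
  · -- addition
    intro r hr α w
    refine Summable.of_nonneg_of_le (fun I => sq_nonneg _) (fun I => ?_)
      (((hF2 r hr α w).add (hG2 r hr α w)).mul_left 2)
    have hadd : iteratedFDeriv 𝕜 r (fun w => F w + G w) w (fun k => dirVec b (α k) (I k)) =
        iteratedFDeriv 𝕜 r F w (fun k => dirVec b (α k) (I k)) +
          iteratedFDeriv 𝕜 r G w (fun k => dirVec b (α k) (I k)) := by
      rw [iteratedFDeriv_add_apply' (hF1.of_le (by exact_mod_cast le_top)).contDiffAt (hG1.of_le (by exact_mod_cast le_top)).contDiffAt,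
        ContinuousMultilinearMap.add_apply]
    rw [hadd]
    set a := ‖iteratedFDeriv 𝕜 r F w (fun k => dirVec b (α k) (I k))‖
    set d := ‖iteratedFDeriv 𝕜 r G w (fun k => dirVec b (α k) (I k))‖
    calc ‖iteratedFDeriv 𝕜 r F w (fun k => dirVec b (α k) (I k)) +
          iteratedFDeriv 𝕜 r G w (fun k => dirVec b (α k) (I k))‖ ^ 2
        ≤ (a + d) ^ 2 := by
          have := norm_add_le (iteratedFDeriv 𝕜 r F w (fun k => dirVec b (α k) (I k)))
            (iteratedFDeriv 𝕜 r G w (fun k => dirVec b (α k) (I k)))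
          exact pow_le_pow_left₀ (norm_nonneg _) this 2
      _ ≤ 2 * (a ^ 2 + d ^ 2) := by nlinarith [sq_nonneg (a - d)]
  · -- multiplication
    intro r hr α w
    -- square-summability of the pieces, for every order (including 0)
    have hsumF : ∀ (k : ℕ) (β : Fin k → Bool),
        Summable fun J : Fin k → ℕ =>
          ‖iteratedFDeriv 𝕜 k F w (fun j => dirVec b (β j) (J j))‖ ^ 2 := by
      intro k β
      rcases Nat.eq_zero_or_pos k with hk | hk
      · subst hk; exact Summable.of_finite
      · exact hF2 k hk β w
    have hsumG : ∀ (k : ℕ) (β : Fin k → Bool),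
        Summable fun J : Fin k → ℕ =>
          ‖iteratedFDeriv 𝕜 k G w (fun j => dirVec b (β j) (J j))‖ ^ 2 := by
      intro k β
      rcases Nat.eq_zero_or_pos k with hk | hk
      · subst hk; exact Summable.of_finite
      · exact hG2 k hk β w
    -- the majorant
    set N : ℝ := ((Finset.univ : Finset (Finset (Fin r))).card : ℝ)
    have hmaj : Summable fun I : Fin r → ℕ => N * ∑ S : Finset (Fin r),
        (‖iteratedFDeriv 𝕜 S.card F w
            (fun j => dirVec b (α (S.orderEmbOfFin rfl j)) (I (S.orderEmbOfFin rfl j)))‖ ^ 2 *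
          ‖iteratedFDeriv 𝕜 Sᶜ.card G w
            (fun j => dirVec b (α (Sᶜ.orderEmbOfFin rfl j)) (I (Sᶜ.orderEmbOfFin rfl j)))‖ ^ 2) := by
      refine Summable.mul_left _ (summable_sum fun S _ => ?_)
      exact summable_split S
        (fun J => ‖iteratedFDeriv 𝕜 S.card F w
          (fun j => dirVec b (α (S.orderEmbOfFin rfl j)) (J j))‖ ^ 2)
        (fun J => ‖iteratedFDeriv 𝕜 Sᶜ.card G w
          (fun j => dirVec b (α (Sᶜ.orderEmbOfFin rfl j)) (J j))‖ ^ 2)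
        (hsumF _ _) (hsumG _ _) (fun J => sq_nonneg _) (fun J => sq_nonneg _)
    refine Summable.of_nonneg_of_le (fun I => sq_nonneg _) (fun I => ?_) hmaj
    rw [leibniz r F G hF1 hG1 w (fun k => dirVec b (α k) (I k))]
    calc ‖∑ S : Finset (Fin r),
          iteratedFDeriv 𝕜 S.card F w
            (fun j => dirVec b (α (S.orderEmbOfFin rfl j)) (I (S.orderEmbOfFin rfl j))) *
          iteratedFDeriv 𝕜 Sᶜ.card G w
            (fun j => dirVec b (α (Sᶜ.orderEmbOfFin rfl j)) (I (Sᶜ.orderEmbOfFin rfl j)))‖ ^ 2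
        ≤ (∑ S : Finset (Fin r),
            ‖iteratedFDeriv 𝕜 S.card F w
              (fun j => dirVec b (α (S.orderEmbOfFin rfl j)) (I (S.orderEmbOfFin rfl j))) *
            iteratedFDeriv 𝕜 Sᶜ.card G w
              (fun j => dirVec b (α (Sᶜ.orderEmbOfFin rfl j)) (I (Sᶜ.orderEmbOfFin rfl j)))‖) ^ 2 :=
          pow_le_pow_left₀ (norm_nonneg _) (norm_sum_le _ _) 2
      _ ≤ N * ∑ S : Finset (Fin r),
            ‖iteratedFDeriv 𝕜 S.card F w
              (fun j => dirVec b (α (S.orderEmbOfFin rfl j)) (I (S.orderEmbOfFin rfl j))) *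
            iteratedFDeriv 𝕜 Sᶜ.card G w
              (fun j => dirVec b (α (Sᶜ.orderEmbOfFin rfl j)) (I (Sᶜ.orderEmbOfFin rfl j)))‖ ^ 2 :=
          sq_sum_le_card_mul_sum_sq
      _ ≤ N * ∑ S : Finset (Fin r),
          (‖iteratedFDeriv 𝕜 S.card F w
              (fun j => dirVec b (α (S.orderEmbOfFin rfl j)) (I (S.orderEmbOfFin rfl j)))‖ ^ 2 *
            ‖iteratedFDeriv 𝕜 Sᶜ.card G w
              (fun j => dirVec b (α (Sᶜ.orderEmbOfFin rfl j)) (I (Sᶜ.orderEmbOfFin rfl j)))‖ ^ 2) := by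
          refine mul_le_mul_of_nonneg_left (Finset.sum_le_sum fun S _ => ?_) (by positivity)
          rw [norm_mul, mul_pow]

end
end

section
/- If A is a Hilbert-Schmidt operator on H, then the Hochschild 2-cocycle E_A(F,G) = ⟨D₁F, A D₂G⟩ + ⟨D₁G, A D₂F⟩ on F_HS is a coboundary: E_A = δT_A where T_A(F)(x,η) = −⟨Ã, D²₁₂F(x,η)⟩, with Ã the bounded linear form on H* ⊗ H induced by A, and δT_A(F,G) = F·T_A(G) − T_A(FG) + T_A(F)·G. -/
noncomputable section

variable {𝕜 : Type*} [RCLike 𝕜]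
variable {H : Type*} [NormedAddCommGroup H] [InnerProductSpace 𝕜 H]

/-- First partial Fréchet derivative `D₁F(x,η) ∈ H*` on `W = H ⊕ H*`. -/
def D1 (F : H × (H →L[𝕜] 𝕜) → 𝕜) (w : H × (H →L[𝕜] 𝕜)) : H →L[𝕜] 𝕜 :=
  (fderiv 𝕜 F w).comp (ContinuousLinearMap.inl 𝕜 H (H →L[𝕜] 𝕜))

/-- Second partial Fréchet derivative `D₂F(x,η) ∈ H** ≅ H` on `W = H ⊕ H*`. -/
def D2 (F : H × (H →L[𝕜] 𝕜) → 𝕜) (w : H × (H →L[𝕜] 𝕜)) : (H →L[𝕜] 𝕜) →L[𝕜] 𝕜 :=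
  (fderiv 𝕜 F w).comp (ContinuousLinearMap.inr 𝕜 H (H →L[𝕜] 𝕜))

/-- The Hochschild 2-cochain `E_A(F,G) = ⟨D₁F, A D₂G⟩ + ⟨D₁G, A D₂F⟩`. -/
def EA (A : H →L[𝕜] H) (F G : H × (H →L[𝕜] 𝕜) → 𝕜) (w : H × (H →L[𝕜] 𝕜)) : 𝕜 :=
  D2 G w ((D1 F w).comp A) + D2 F w ((D1 G w).comp A)

/-- The differential operator `T_A(F) = −⟨Ã, D²₁₂F⟩`, where `Ã` is the linear form on
`H* ⊗ H` induced by `A`; in coordinates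
`T_A(F)(w) = −∑_{i,j} ⟨e_i, A e_j⟩ ∂_{i j*}F(w)`. -/
def TA (b : HilbertBasis ℕ 𝕜 H) (A : H →L[𝕜] H) (F : H × (H →L[𝕜] 𝕜) → 𝕜)
    (w : H × (H →L[𝕜] 𝕜)) : 𝕜 :=
  -∑' p : ℕ × ℕ, (inner 𝕜 (b p.1 : H) (A (b p.2)) : 𝕜) *
      iteratedFDeriv 𝕜 2 F w ![((b p.1 : H), 0), ((0 : H), innerSL 𝕜 (b p.2))]

/-- A bounded operator is Hilbert-Schmidt iff its matrix w.r.t. an orthonormal basis is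
square-summable. -/
def IsHSOp (b : HilbertBasis ℕ 𝕜 H) (A : H →L[𝕜] H) : Prop :=
  Summable fun p : ℕ × ℕ => ‖(inner 𝕜 (b p.1 : H) (A (b p.2)) : 𝕜)‖ ^ 2

/-! ### Auxiliary lemmas -/

/-- Cauchy–Schwarz for summability: the pointwise product of two square-summable
families is (absolutely) summable. -/
lemma summable_mul_of_sq {ι : Type*} {f g : ι → 𝕜}
    (hf : Summable fun i => ‖f i‖ ^ 2) (hg : Summable fun i => ‖g i‖ ^ 2) :
    Summable fun i => f i * g i := by
  refine Summable.of_norm ?_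
  refine Summable.of_nonneg_of_le (fun i => norm_nonneg _) (fun i => ?_)
    ((hf.add hg).div_const 2)
  rw [norm_mul]
  nlinarith [norm_nonneg (f i), norm_nonneg (g i), sq_nonneg (‖f i‖ - ‖g i‖)]

/-- The Leibniz rule for the second Fréchet derivative of a product. -/
lemma second_deriv_mul {W : Type*} [NormedAddCommGroup W] [NormedSpace 𝕜 W]
    {F G : W → 𝕜} (hF : ContDiff 𝕜 (⊤ : ℕ∞) F) (hG : ContDiff 𝕜 (⊤ : ℕ∞) G) (w u v : W) :
    iteratedFDeriv 𝕜 2 (fun x => F x * G x) w ![u, v] =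
      F w * iteratedFDeriv 𝕜 2 G w ![u, v] + G w * iteratedFDeriv 𝕜 2 F w ![u, v] +
        fderiv 𝕜 F w u * fderiv 𝕜 G w v + fderiv 𝕜 G w u * fderiv 𝕜 F w v := by
  have hF1 : Differentiable 𝕜 F := hF.differentiable (by simp)
  have hG1 : Differentiable 𝕜 G := hG.differentiable (by simp)
  have hF2 : Differentiable 𝕜 (fderiv 𝕜 F) :=
    (hF.fderiv_right (m := (⊤ : ℕ∞)) (by simp)).differentiable (by simp)
  have hG2 : Differentiable 𝕜 (fderiv 𝕜 G) :=
    (hG.fderiv_right (m := (⊤ : ℕ∞)) (by simp)).differentiable (by simp)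
  have key : fderiv 𝕜 (fun x => F x * G x) =
      fun x => F x • fderiv 𝕜 G x + G x • fderiv 𝕜 F x :=
    funext fun x => fderiv_mul (hF1 x) (hG1 x)
  have hD : HasFDerivAt (fun x => F x • fderiv 𝕜 G x + G x • fderiv 𝕜 F x)
      ((F w • fderiv 𝕜 (fderiv 𝕜 G) w +
          (fderiv 𝕜 F w).smulRight (fderiv 𝕜 G w)) +
        (G w • fderiv 𝕜 (fderiv 𝕜 F) w +
          (fderiv 𝕜 G w).smulRight (fderiv 𝕜 F w))) w :=
    (((hF1 w).hasFDerivAt).smul ((hG2 w).hasFDerivAt)).add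
      (((hG1 w).hasFDerivAt).smul ((hF2 w).hasFDerivAt))
  rw [iteratedFDeriv_two_apply, iteratedFDeriv_two_apply, iteratedFDeriv_two_apply,
    key, hD.fderiv]
  simp only [Matrix.cons_val_zero, Matrix.cons_val_one, Matrix.head_cons,
    ContinuousLinearMap.add_apply, ContinuousLinearMap.smul_apply,
    ContinuousLinearMap.smulRight_apply, smul_eq_mul]
  ring

lemma isHS_summable_d1_sq {b : HilbertBasis ℕ 𝕜 H} {F : H × (H →L[𝕜] 𝕜) → 𝕜}
    (hF : IsHS b F) (w : H × (H →L[𝕜] 𝕜)) :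
    Summable fun i : ℕ => ‖fderiv 𝕜 F w ((b i : H), 0)‖ ^ 2 := by
  have h := hF.2 1 one_pos ![true] w
  have h' : (fun I : Fin 1 → ℕ =>
      ‖iteratedFDeriv 𝕜 1 F w (fun k => dirVec b (![true] k) (I k))‖ ^ 2) =
      (fun i : ℕ => ‖fderiv 𝕜 F w ((b i : H), 0)‖ ^ 2) ∘ (Equiv.funUnique (Fin 1) ℕ) := by
    funext I
    simp [iteratedFDeriv_one_apply, dirVec]
  rw [h'] at h
  exact (Equiv.funUnique (Fin 1) ℕ).summable_iff.mp h

lemma isHS_summable_d2_sq {b : HilbertBasis ℕ 𝕜 H} {F : H × (H →L[𝕜] 𝕜) → 𝕜}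
    (hF : IsHS b F) (w : H × (H →L[𝕜] 𝕜)) :
    Summable fun i : ℕ => ‖fderiv 𝕜 F w ((0 : H), innerSL 𝕜 (b i))‖ ^ 2 := by
  have h := hF.2 1 one_pos ![false] w
  have h' : (fun I : Fin 1 → ℕ =>
      ‖iteratedFDeriv 𝕜 1 F w (fun k => dirVec b (![false] k) (I k))‖ ^ 2) =
      (fun i : ℕ => ‖fderiv 𝕜 F w ((0 : H), innerSL 𝕜 (b i))‖ ^ 2) ∘
        (Equiv.funUnique (Fin 1) ℕ) := by
    funext I
    simp [iteratedFDeriv_one_apply, dirVec]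
  rw [h'] at h
  exact (Equiv.funUnique (Fin 1) ℕ).summable_iff.mp h

lemma isHS_summable_mixed_sq {b : HilbertBasis ℕ 𝕜 H} {F : H × (H →L[𝕜] 𝕜) → 𝕜}
    (hF : IsHS b F) (w : H × (H →L[𝕜] 𝕜)) :
    Summable fun p : ℕ × ℕ =>
      ‖iteratedFDeriv 𝕜 2 F w ![((b p.1 : H), 0), ((0 : H), innerSL 𝕜 (b p.2))]‖ ^ 2 := by
  have h := hF.2 2 two_pos ![true, false] w
  have h' : (fun I : Fin 2 → ℕ =>
      ‖iteratedFDeriv 𝕜 2 F w (fun k => dirVec b (![true, false] k) (I k))‖ ^ 2) =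
      (fun p : ℕ × ℕ =>
        ‖iteratedFDeriv 𝕜 2 F w ![((b p.1 : H), 0), ((0 : H), innerSL 𝕜 (b p.2))]‖ ^ 2) ∘
        (piFinTwoEquiv fun _ => ℕ) := by
    funext I
    have hdir : (fun k => dirVec b (![true, false] k) (I k)) =
        ![((b (I 0) : H), 0), ((0 : H), innerSL 𝕜 (b (I 1)))] := by
      funext k
      fin_cases k <;> simp [dirVec]
    simp [hdir]
  rw [h'] at h
  exact (piFinTwoEquiv fun _ => ℕ).summable_iff.mp h

/-- Summability of the cross terms weighted by a Hilbert–Schmidt matrix. -/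
lemma summable_cross (b : HilbertBasis ℕ 𝕜 H) (A : H →L[𝕜] H)
    (hA : IsHSOp b A) {P Q : H × (H →L[𝕜] 𝕜) → 𝕜}
    (hP : IsHS b P) (hQ : IsHS b Q) (w : H × (H →L[𝕜] 𝕜)) :
    Summable fun p : ℕ × ℕ => (inner 𝕜 (b p.1 : H) (A (b p.2)) : 𝕜) *
      (fderiv 𝕜 P w ((b p.1 : H), 0) * fderiv 𝕜 Q w ((0 : H), innerSL 𝕜 (b p.2))) := by
  have hXsq : Summable fun p : ℕ × ℕ =>
      ‖fderiv 𝕜 P w ((b p.1 : H), 0) * fderiv 𝕜 Q w ((0 : H), innerSL 𝕜 (b p.2))‖ ^ 2 := by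
    have h := (isHS_summable_d1_sq hP w).mul_of_nonneg (isHS_summable_d2_sq hQ w)
      (fun i => sq_nonneg _) (fun j => sq_nonneg _)
    refine h.congr fun p => ?_
    rw [norm_mul, mul_pow]
  exact summable_mul_of_sq hA hXsq

/-- The key identity: the coordinate expansion of `⟨D₁P, A D₂Q⟩`. -/
lemma tsum_cross [CompleteSpace H] (b : HilbertBasis ℕ 𝕜 H) (A : H →L[𝕜] H)
    (hA : IsHSOp b A) {P Q : H × (H →L[𝕜] 𝕜) → 𝕜}
    (hP : IsHS b P) (hQ : IsHS b Q) (w : H × (H →L[𝕜] 𝕜)) :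
    ∑' p : ℕ × ℕ, (inner 𝕜 (b p.1 : H) (A (b p.2)) : 𝕜) *
        (fderiv 𝕜 P w ((b p.1 : H), 0) * fderiv 𝕜 Q w ((0 : H), innerSL 𝕜 (b p.2))) =
      D2 Q w ((D1 P w).comp A) := by
  set a : ℕ × ℕ → 𝕜 := fun p => (inner 𝕜 (b p.1 : H) (A (b p.2)) : 𝕜) with ha
  set φ : H →L[𝕜] 𝕜 := (D1 P w).comp A with hφ
  have hsum := summable_cross b A hA hP hQ w
  -- inner sums over i
  have step1 : ∀ j : ℕ, HasSum (fun i : ℕ => a (i, j) * fderiv 𝕜 P w ((b i : H), 0))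
      (φ (b j)) := by
    intro j
    have h1 := (D1 P w).hasSum (b.hasSum_repr (A (b j)))
    have heq : (fun i : ℕ => (D1 P w) (b.repr (A (b j)) i • (b i : H))) =
        fun i : ℕ => a (i, j) * fderiv 𝕜 P w ((b i : H), 0) := by
      funext i
      simp [D1, b.repr_apply_apply, ha, smul_eq_mul]
    rw [heq] at h1
    simpa [hφ] using h1
  -- the sum over j of `φ (b j) • e_j*` converges to `φ` in `H*`
  have step2 : HasSum (fun j : ℕ => φ (b j) • innerSL 𝕜 (b j)) φ := by
    set f' : H := (InnerProductSpace.toDual 𝕜 H).symm φ with hf'def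
    have hf' : ∀ y : H, (inner 𝕜 f' y : 𝕜) = φ y := fun y =>
      InnerProductSpace.toDual_symm_apply
    have h1 := (innerSL 𝕜 (E := H)).hasSum (b.hasSum_repr f')
    have heq : (fun j : ℕ => innerSL 𝕜 ((b.repr f' j) • (b j : H))) =
        fun j : ℕ => φ (b j) • innerSL 𝕜 (b j) := by
      funext j
      rw [map_smulₛₗ, b.repr_apply_apply]
      congr 1
      rw [inner_conj_symm]
      exact hf' (b j)
    have hend : innerSL 𝕜 f' = φ := ContinuousLinearMap.ext fun y => by
      rw [innerSL_apply_apply]; exact hf' y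
    rw [heq, hend] at h1
    exact h1
  have step3 : HasSum (fun j : ℕ => φ (b j) * fderiv 𝕜 Q w ((0 : H), innerSL 𝕜 (b j)))
      (D2 Q w φ) := by
    have h1 := (D2 Q w).hasSum step2
    have heq : (fun j : ℕ => (D2 Q w) (φ (b j) • innerSL 𝕜 (b j))) =
        fun j : ℕ => φ (b j) * fderiv 𝕜 Q w ((0 : H), innerSL 𝕜 (b j)) := by
      funext j
      simp [D2, smul_eq_mul]
    rw [heq] at h1
    exact h1
  -- put the sums together
  set f : ℕ × ℕ → 𝕜 := fun p => a p *
    (fderiv 𝕜 P w ((b p.1 : H), 0) * fderiv 𝕜 Q w ((0 : H), innerSL 𝕜 (b p.2))) with hf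
  have hgsum : Summable fun q : ℕ × ℕ => f (q.2, q.1) :=
    ((Equiv.prodComm ℕ ℕ).summable_iff (f := fun q : ℕ × ℕ => f (q.2, q.1))).mp
      (by simpa [Function.comp_def] using hsum)
  calc ∑' p : ℕ × ℕ, f p = ∑' q : ℕ × ℕ, f (q.2, q.1) := by
        rw [← (Equiv.prodComm ℕ ℕ).tsum_eq (fun q : ℕ × ℕ => f (q.2, q.1))]
        simp
    _ = ∑' j : ℕ, ∑' i : ℕ, f (i, j) :=
        Summable.tsum_prod' hgsum fun j => hgsum.prod_factor j
    _ = ∑' j : ℕ, φ (b j) * fderiv 𝕜 Q w ((0 : H), innerSL 𝕜 (b j)) := by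
        refine tsum_congr fun j => ?_
        have : ∀ i : ℕ, f (i, j) =
            (a (i, j) * fderiv 𝕜 P w ((b i : H), 0)) *
              fderiv 𝕜 Q w ((0 : H), innerSL 𝕜 (b j)) := fun i => by
          rw [hf]; ring
        rw [tsum_congr this, tsum_mul_right, (step1 j).tsum_eq]
    _ = D2 Q w φ := step3.tsum_eq

/-- if `A` is a Hilbert-Schmidt operator on `H`, then the Hochschild 2-cocycle
`E_A` on `F_HS` is the coboundary of `T_A`:
`E_A(F,G) = F·T_A(G) − T_A(FG) + T_A(F)·G`. -/
theorem EA_is_coboundary (b : HilbertBasis ℕ 𝕜 H) (A : H →L[𝕜] H) (hA : IsHSOp b A)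
    (F G : H × (H →L[𝕜] 𝕜) → 𝕜) (hF : IsHS b F) (hG : IsHS b G)
    (w : H × (H →L[𝕜] 𝕜)) :
    EA A F G w =
      F w * TA b A G w - TA b A (fun v => F v * G v) w + TA b A F w * G w := by
  have : CompleteSpace H :=
    (b.repr.symm.isometry.isUniformInducing.completeSpace_congr
      b.repr.symm.surjective).1 inferInstance
  set a : ℕ × ℕ → 𝕜 := fun p => (inner 𝕜 (b p.1 : H) (A (b p.2)) : 𝕜) with ha
  set sF2 : ℕ × ℕ → 𝕜 := fun p =>
    iteratedFDeriv 𝕜 2 F w ![((b p.1 : H), 0), ((0 : H), innerSL 𝕜 (b p.2))] with hsF2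
  set sG2 : ℕ × ℕ → 𝕜 := fun p =>
    iteratedFDeriv 𝕜 2 G w ![((b p.1 : H), 0), ((0 : H), innerSL 𝕜 (b p.2))] with hsG2
  set X : ℕ × ℕ → 𝕜 := fun p =>
    fderiv 𝕜 F w ((b p.1 : H), 0) * fderiv 𝕜 G w ((0 : H), innerSL 𝕜 (b p.2)) with hX
  set Y : ℕ × ℕ → 𝕜 := fun p =>
    fderiv 𝕜 G w ((b p.1 : H), 0) * fderiv 𝕜 F w ((0 : H), innerSL 𝕜 (b p.2)) with hY
  have SG : Summable fun p => a p * sG2 p :=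
    summable_mul_of_sq hA (isHS_summable_mixed_sq hG w)
  have SF : Summable fun p => a p * sF2 p :=
    summable_mul_of_sq hA (isHS_summable_mixed_sq hF w)
  have SX : Summable fun p => a p * X p := summable_cross b A hA hF hG w
  have SY : Summable fun p => a p * Y p := summable_cross b A hA hG hF w
  -- Leibniz rule in coordinates
  have hre : (fun p : ℕ × ℕ => a p *
      iteratedFDeriv 𝕜 2 (fun v => F v * G v) w
        ![((b p.1 : H), 0), ((0 : H), innerSL 𝕜 (b p.2))]) =
      fun p : ℕ × ℕ => F w * (a p * sG2 p) + G w * (a p * sF2 p) +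
        a p * X p + a p * Y p := by
    funext p
    rw [second_deriv_mul hF.1 hG.1]
    simp only [hsF2, hsG2, hX, hY]
    ring
  have hTAFG : TA b A (fun v => F v * G v) w =
      -(F w * ∑' p, a p * sG2 p + G w * ∑' p, a p * sF2 p +
        ∑' p, a p * X p + ∑' p, a p * Y p) := by
    rw [TA, hre]
    congr 1
    rw [Summable.tsum_add (((SG.mul_left (F w)).add (SF.mul_left (G w))).add SX) SY,
      Summable.tsum_add ((SG.mul_left (F w)).add (SF.mul_left (G w))) SX,
      Summable.tsum_add (SG.mul_left (F w)) (SF.mul_left (G w)),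
      tsum_mul_left, tsum_mul_left]
  have hTAG : TA b A G w = -∑' p, a p * sG2 p := rfl
  have hTAF : TA b A F w = -∑' p, a p * sF2 p := rfl
  have hEA : EA A F G w = (∑' p, a p * X p) + ∑' p, a p * Y p := by
    rw [EA, ← tsum_cross b A hA hF hG w, ← tsum_cross b A hA hG hF w]
  rw [hEA, hTAFG, hTAG, hTAF]
  ring

end
end
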